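/- For a complete and decomposable SPN S, the root value V_root(x; w) equals the sum over all induced trees T_t of S of (∏_{(k,j) ∈ edges(T_t) from sum nodes} w_{k,j}) · (∏_{leaves ℓ ∈ T_t} V_ℓ(x)), i.e., the network polynomial admits the induced-tree decomposition. -/

import Mathlib

open scoped Classical

/-- The kind of a node in a sum-product network. -/
inductive NodeKind | sum | prod | leaf
deriving DecidableEq

/-- A sum-product network (SPN) over variables `X_1, …, X_n`: a rooted DAG with `N` nodes
(indexed so that edges go from larger to smaller indices), where each node is a sum node,
a product node, or a leaf labelled with a variable, and sum edges carry weights. -/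
structure SPN (N n : ℕ) where
  kind : Fin N → NodeKind
  children : Fin N → Finset (Fin N)
  var : Fin N → Fin n
  root : Fin N
  child_lt : ∀ k, ∀ j ∈ children k, j < k
  leaf_iff : ∀ k, kind k = NodeKind.leaf ↔ children k = ∅

namespace SPN

variable {N n : ℕ}

/-- Recursive evaluation of an SPN: leaves return their given values, product nodes multiply
their children's values, sum nodes take weighted sums of their children's values. -/
noncomputable def value (S : SPN N n) (leaf : Fin N → ℝ) (w : Fin N → Fin N → ℝ) :
    Fin N → ℝ
  | k =>
    match S.kind k with
    | NodeKind.leaf => leaf k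
    | NodeKind.prod => ∏ j ∈ (S.children k).attach, value S leaf w j.1
    | NodeKind.sum => ∑ j ∈ (S.children k).attach, w k j.1 * value S leaf w j.1
  termination_by k => (k : ℕ)
  decreasing_by all_goals exact S.child_lt _ _ j.2

/-- Evaluation where the value of the node `k₀` is overridden by the free value `t`
(used to differentiate the root value with respect to the value of node `k₀`). -/
noncomputable def valueAt (S : SPN N n) (leaf : Fin N → ℝ) (w : Fin N → Fin N → ℝ)
    (k₀ : Fin N) (t : ℝ) : Fin N → ℝ
  | k =>
    if k = k₀ then t else
      match S.kind k with
      | NodeKind.leaf => leaf k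
      | NodeKind.prod => ∏ j ∈ (S.children k).attach, valueAt S leaf w k₀ t j.1
      | NodeKind.sum => ∑ j ∈ (S.children k).attach, w k j.1 * valueAt S leaf w k₀ t j.1
  termination_by k => (k : ℕ)
  decreasing_by all_goals exact S.child_lt _ _ j.2

/-- The scope of a node: the set of variables appearing below it. -/
noncomputable def scope (S : SPN N n) : Fin N → Finset (Fin n)
  | k =>
    match S.kind k with
    | NodeKind.leaf => {S.var k}
    | _ => (S.children k).attach.biUnion (fun j => scope S j.1)
  termination_by k => (k : ℕ)
  decreasing_by all_goals exact S.child_lt _ _ j.2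

/-- An SPN is complete if all children of a sum node have the same scope. -/
def Complete (S : SPN N n) : Prop :=
  ∀ k, S.kind k = NodeKind.sum →
    ∀ j₁ ∈ S.children k, ∀ j₂ ∈ S.children k, S.scope j₁ = S.scope j₂

/-- An SPN is decomposable if distinct children of a product node have disjoint scopes. -/
def Decomposable (S : SPN N n) : Prop :=
  ∀ k, S.kind k = NodeKind.prod →
    ∀ j₁ ∈ S.children k, ∀ j₂ ∈ S.children k, j₁ ≠ j₂ →
      Disjoint (S.scope j₁) (S.scope j₂)

/-- `(TV, TE)` is an induced tree of the SPN `S`: it contains the root; its edges are edges of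
`S` between its nodes; every sum node in it has exactly one outgoing edge in it; every product
node in it keeps all its outgoing edges; and every non-root node in it is the endpoint of one
of its edges. -/
def IsInducedTree (S : SPN N n) (TV : Finset (Fin N)) (TE : Finset (Fin N × Fin N)) : Prop :=
  S.root ∈ TV ∧
  (∀ e ∈ TE, e.1 ∈ TV ∧ e.2 ∈ TV ∧ e.2 ∈ S.children e.1) ∧
  (∀ k ∈ TV, S.kind k = NodeKind.sum → ∃! j, j ∈ S.children k ∧ (k, j) ∈ TE) ∧
  (∀ k ∈ TV, S.kind k = NodeKind.prod → ∀ j ∈ S.children k, (k, j) ∈ TE) ∧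
  (∀ k ∈ TV, k ≠ S.root → ∃ e ∈ TE, e.2 = k)

end SPN

/-!
Every node `r` has as value the total weight of the induced trees rooted at `r`; this is proved
by induction on the node index. At a sum node, the trees rooted at `r` are obtained bijectively
from a child `j` and a tree rooted at `j` by adding the edge `(r, j)`, which multiplies the weight
by `w r j`. At a product node, they are obtained bijectively by gluing under `r` one tree rooted
at each child. Decomposability makes these trees vertex-disjoint (a node below two distinct
children would put its nonempty scope into both of their disjoint scopes), so the weight of the
glued tree is the product of their weights, and expanding the product of sums finishes the step.
-/

namespace SPN

variable {N n : ℕ}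

section Value

variable (S : SPN N n) (leaf : Fin N → ℝ) (w : Fin N → Fin N → ℝ) {k : Fin N}

lemma value_of_leaf (hk : S.kind k = .leaf) : S.value leaf w k = leaf k := by
  rw [value, hk]

lemma value_of_prod (hk : S.kind k = .prod) :
    S.value leaf w k = ∏ j ∈ S.children k, S.value leaf w j := by
  rw [value, hk, Finset.prod_attach _ (S.value leaf w)]

lemma value_of_sum (hk : S.kind k = .sum) :
    S.value leaf w k = ∑ j ∈ S.children k, w k j * S.value leaf w j := by
  rw [value, hk, Finset.sum_attach _ (fun j => w k j * S.value leaf w j)]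

end Value

section Scope

variable (S : SPN N n)

lemma scope_eq_biUnion_of_ne_leaf {k : Fin N} (hk : S.kind k ≠ .leaf) :
    S.scope k = (S.children k).attach.biUnion fun i => S.scope i.1 := by
  rw [scope]
  cases hk' : S.kind k <;> simp_all

lemma scope_subset_of_mem_children {j k : Fin N} (hj : j ∈ S.children k) :
    S.scope j ⊆ S.scope k := by
  have hk : S.kind k ≠ .leaf := fun h => by simp [(S.leaf_iff k).1 h] at hj
  rw [S.scope_eq_biUnion_of_ne_leaf hk]
  exact Finset.subset_biUnion_of_mem (fun i : S.children k => S.scope i.1)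
    (Finset.mem_attach _ ⟨j, hj⟩)

lemma scope_nonempty (k : Fin N) : (S.scope k).Nonempty := by
  induction k using WellFoundedLT.induction with
  | _ k ih =>
    by_cases hk : S.kind k = .leaf
    · rw [scope, hk]
      exact Finset.singleton_nonempty _
    · obtain ⟨j, hj⟩ := Finset.nonempty_iff_ne_empty.2 (mt (S.leaf_iff k).2 hk)
      exact (ih j (S.child_lt k j hj)).mono (S.scope_subset_of_mem_children hj)

end Scope

def IsDescendant (S : SPN N n) : Fin N → Fin N → Prop :=
  Relation.ReflTransGen fun m k => m ∈ S.children k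

namespace IsDescendant

variable {S : SPN N n} {m k : Fin N}

lemma le (h : S.IsDescendant m k) : m ≤ k := by
  induction h with
  | refl => exact le_rfl
  | tail _ hc ih => exact ih.trans (S.child_lt _ _ hc).le

lemma scope_subset (h : S.IsDescendant m k) : S.scope m ⊆ S.scope k := by
  induction h with
  | refl => exact subset_rfl
  | tail _ hc ih => exact ih.trans (S.scope_subset_of_mem_children hc)

end IsDescendant

lemma Decomposable.eq_of_isDescendant {S : SPN N n} (hD : S.Decomposable) {r a b m : Fin N}
    (hr : S.kind r = .prod) (ha : a ∈ S.children r) (hb : b ∈ S.children r)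
    (hma : S.IsDescendant m a) (hmb : S.IsDescendant m b) : a = b := by
  by_contra hab
  obtain ⟨x, hx⟩ := S.scope_nonempty m
  exact Finset.disjoint_left.1 (hD r hr a ha b hb hab) (hma.scope_subset hx) (hmb.scope_subset hx)

abbrev Subgraph (N : ℕ) := Finset (Fin N) × Finset (Fin N × Fin N)

structure IsTreeAt (S : SPN N n) (r : Fin N) (p : Subgraph N) : Prop where
  root_mem : r ∈ p.1
  edge_mem : ∀ e ∈ p.2, e.1 ∈ p.1 ∧ e.2 ∈ p.1 ∧ e.2 ∈ S.children e.1
  sum_edge : ∀ k ∈ p.1, S.kind k = .sum → ∃! j, j ∈ S.children k ∧ (k, j) ∈ p.2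
  prod_edge : ∀ k ∈ p.1, S.kind k = .prod → ∀ j ∈ S.children k, (k, j) ∈ p.2
  exists_parent : ∀ k ∈ p.1, k ≠ r → ∃ e ∈ p.2, e.2 = k

lemma isInducedTree_iff_isTreeAt_root (S : SPN N n) {p : Subgraph N} :
    S.IsInducedTree p.1 p.2 ↔ S.IsTreeAt S.root p :=
  ⟨fun ⟨h₁, h₂, h₃, h₄, h₅⟩ => ⟨h₁, h₂, h₃, h₄, h₅⟩,
    fun ⟨h₁, h₂, h₃, h₄, h₅⟩ => ⟨h₁, h₂, h₃, h₄, h₅⟩⟩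

namespace IsTreeAt

variable {S : SPN N n} {r m : Fin N} {p : Subgraph N}

lemma isDescendant_root (h : S.IsTreeAt r p) (hm : m ∈ p.1) : S.IsDescendant m r := by
  induction m using WellFoundedGT.induction with
  | _ m ih =>
    by_cases hmr : m = r
    · exact hmr ▸ .refl
    obtain ⟨e, he, rfl⟩ := h.exists_parent m hm hmr
    obtain ⟨he₁, -, hchild⟩ := h.edge_mem e he
    exact Relation.ReflTransGen.head hchild (ih e.1 (S.child_lt _ _ hchild) he₁)

lemma le_root (h : S.IsTreeAt r p) (hm : m ∈ p.1) : m ≤ r :=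
  (h.isDescendant_root hm).le

lemma exists_child_of_ne_root (h : S.IsTreeAt r p) (hm : m ∈ p.1) (hmr : m ≠ r) :
    ∃ j ∈ S.children r, S.IsDescendant m j := by
  obtain hrm | ⟨j, hmj, hjr⟩ := (Relation.ReflTransGen.cases_tail_iff _ _ _).1
    (h.isDescendant_root hm)
  · exact absurd hrm.symm hmr
  · exact ⟨j, hjr, hmj⟩

lemma notMem_of_lt (h : S.IsTreeAt r p) {k : Fin N} (hrk : r < k) : k ∉ p.1 :=
  fun hk => (h.le_root hk).not_gt hrk

lemma edge_notMem_of_lt (h : S.IsTreeAt r p) {k : Fin N} (hrk : r < k) (j : Fin N) :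
    (k, j) ∉ p.2 :=
  fun hkj => h.notMem_of_lt hrk (h.edge_mem _ hkj).1

end IsTreeAt

noncomputable def treeSet (S : SPN N n) (r : Fin N) : Finset (Subgraph N) :=
  Finset.univ.filter (S.IsTreeAt r)

lemma mem_treeSet {S : SPN N n} {r : Fin N} {p : Subgraph N} :
    p ∈ S.treeSet r ↔ S.IsTreeAt r p := by
  simp [treeSet]

noncomputable def weight (S : SPN N n) (leaf : Fin N → ℝ) (w : Fin N → Fin N → ℝ)
    (p : Subgraph N) : ℝ :=
  (∏ e ∈ p.2.filter (fun e => S.kind e.1 = NodeKind.sum), w e.1 e.2)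
    * ∏ k ∈ p.1.filter (fun k => S.kind k = NodeKind.leaf), leaf k

section Leaf

variable {S : SPN N n} {r : Fin N}

lemma treeSet_of_leaf (hr : S.kind r = .leaf) : S.treeSet r = {({r}, ∅)} := by
  have hch := (S.leaf_iff r).1 hr
  ext p
  rw [mem_treeSet, Finset.mem_singleton]
  constructor
  · intro h
    have hV : p.1 = {r} := by
      refine Finset.eq_singleton_iff_unique_mem.2 ⟨h.root_mem, fun m hm => ?_⟩
      by_contra hmr
      obtain ⟨j, hj, -⟩ := h.exists_child_of_ne_root hm hmr
      simp [hch] at hj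
    have hE : p.2 = ∅ := Finset.eq_empty_of_forall_notMem fun e he => by
      obtain ⟨he₁, -, hchild⟩ := h.edge_mem e he
      rw [hV, Finset.mem_singleton] at he₁
      simp [he₁, hch] at hchild
    exact Prod.ext hV hE
  · rintro rfl
    exact ⟨by simp, by simp, by simp [hr], by simp [hr], by simp⟩

lemma weight_of_leaf (leaf : Fin N → ℝ) (w : Fin N → Fin N → ℝ) (hr : S.kind r = .leaf) :
    S.weight leaf w ({r}, ∅) = leaf r := by
  simp [weight, Finset.filter_singleton, hr]

end Leaf

section Sum

variable {S : SPN N n} {r j : Fin N} {p : Subgraph N}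

lemma IsTreeAt.insert_of_sum (h : S.IsTreeAt j p) (hr : S.kind r = .sum)
    (hj : j ∈ S.children r) : S.IsTreeAt r (insert r p.1, insert (r, j) p.2) := by
  have hjr := S.child_lt r j hj
  refine ⟨Finset.mem_insert_self r _, ?_, ?_, ?_, ?_⟩
  · intro e he
    rcases Finset.mem_insert.1 he with rfl | he
    · exact ⟨Finset.mem_insert_self _ _, Finset.mem_insert_of_mem h.root_mem, hj⟩
    · obtain ⟨h₁, h₂, h₃⟩ := h.edge_mem e he
      exact ⟨Finset.mem_insert_of_mem h₁, Finset.mem_insert_of_mem h₂, h₃⟩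
  · rintro k hk hks
    rcases Finset.mem_insert.1 hk with rfl | hk
    · refine ⟨j, ⟨hj, Finset.mem_insert_self _ _⟩, fun y ⟨_, hy⟩ => ?_⟩
      rcases Finset.mem_insert.1 hy with hy | hy
      · exact (Prod.mk.inj hy).2
      · exact absurd hy (h.edge_notMem_of_lt hjr y)
    · obtain ⟨y, hy, huniq⟩ := h.sum_edge k hk hks
      refine ⟨y, ⟨hy.1, Finset.mem_insert_of_mem hy.2⟩, fun y' ⟨hy'c, hy'⟩ => ?_⟩
      rcases Finset.mem_insert.1 hy' with hy' | hy'
      · exact absurd ((Prod.mk.inj hy').1 ▸ hk) (h.notMem_of_lt hjr)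
      · exact huniq y' ⟨hy'c, hy'⟩
  · rintro k hk hkp
    rcases Finset.mem_insert.1 hk with rfl | hk
    · simp [hr] at hkp
    · exact fun y hy => Finset.mem_insert_of_mem (h.prod_edge k hk hkp y hy)
  · rintro k hk hkr
    rcases Finset.mem_insert.1 hk with rfl | hk
    · exact absurd rfl hkr
    by_cases hkj : k = j
    · exact ⟨(r, j), Finset.mem_insert_self _ _, hkj.symm⟩
    · obtain ⟨e, he, he₂⟩ := h.exists_parent k hk hkj
      exact ⟨e, Finset.mem_insert_of_mem he, he₂⟩
lemma IsTreeAt.erase_of_sum (h : S.IsTreeAt r p) (hr : S.kind r = .sum)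
    (hj : j ∈ S.children r) (hrj : (r, j) ∈ p.2) :
    S.IsTreeAt j (p.1.erase r, p.2.erase (r, j)) := by
  have hsnd_ne : ∀ e ∈ p.2, e.2 ≠ r := fun e he her =>
    (h.le_root (h.edge_mem e he).1).not_gt (her ▸ S.child_lt _ _ (h.edge_mem e he).2.2)
  have hfst_ne : ∀ e ∈ p.2, e ≠ (r, j) → e.1 ≠ r := fun e he hne her => hne <| Prod.ext her <|
    (h.sum_edge r h.root_mem hr).unique ⟨her ▸ (h.edge_mem e he).2.2, her ▸ he⟩ ⟨hj, hrj⟩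
  refine ⟨Finset.mem_erase.2 ⟨(S.child_lt r j hj).ne, (h.edge_mem _ hrj).2.1⟩, ?_, ?_, ?_, ?_⟩
  · intro e he
    obtain ⟨hne, he⟩ := Finset.mem_erase.1 he
    obtain ⟨h₁, h₂, h₃⟩ := h.edge_mem e he
    exact ⟨Finset.mem_erase.2 ⟨hfst_ne e he hne, h₁⟩, Finset.mem_erase.2 ⟨hsnd_ne e he, h₂⟩, h₃⟩
  · intro k hk hks
    obtain ⟨hkr, hk⟩ := Finset.mem_erase.1 hk
    obtain ⟨y, hy, huniq⟩ := h.sum_edge k hk hks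
    exact ⟨y, ⟨hy.1, Finset.mem_erase.2 ⟨fun he => hkr (Prod.mk.inj he).1, hy.2⟩⟩,
      fun y' hy' => huniq y' ⟨hy'.1, Finset.mem_of_mem_erase hy'.2⟩⟩
  · intro k hk hkp y hy
    obtain ⟨hkr, hk⟩ := Finset.mem_erase.1 hk
    exact Finset.mem_erase.2 ⟨fun he => hkr (Prod.mk.inj he).1, h.prod_edge k hk hkp y hy⟩
  · intro k hk hkj
    obtain ⟨hkr, hk⟩ := Finset.mem_erase.1 hk
    obtain ⟨e, he, rfl⟩ := h.exists_parent k hk hkr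
    exact ⟨e, Finset.mem_erase.2 ⟨fun hej => hkj (hej ▸ rfl), he⟩, rfl⟩

lemma weight_insert_of_sum (leaf : Fin N → ℝ) (w : Fin N → Fin N → ℝ)
    (hr : S.kind r = .sum) (hrE : (r, j) ∉ p.2) :
    S.weight leaf w (insert r p.1, insert (r, j) p.2) = w r j * S.weight leaf w p := by
  have hr' : S.kind r ≠ .leaf := by simp [hr]
  rw [weight, weight, Finset.filter_insert, if_pos hr,
    Finset.prod_insert (fun hmem => hrE (Finset.mem_filter.1 hmem).1),
    Finset.filter_insert, if_neg hr', mul_assoc]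

lemma sum_weight_treeSet_filter_of_sum (leaf : Fin N → ℝ) (w : Fin N → Fin N → ℝ)
    (hr : S.kind r = .sum) (hj : j ∈ S.children r) :
    ∑ p ∈ (S.treeSet r).filter (fun p => (r, j) ∈ p.2), S.weight leaf w p
      = w r j * ∑ p ∈ S.treeSet j, S.weight leaf w p := by
  have hjr := S.child_lt r j hj
  rw [Finset.mul_sum]
  refine (Finset.sum_nbij' (fun p => (insert r p.1, insert (r, j) p.2))
    (fun p => (p.1.erase r, p.2.erase (r, j))) ?_ ?_ ?_ ?_ ?_).symm
  · intro p hp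
    exact Finset.mem_filter.2
      ⟨mem_treeSet.2 ((mem_treeSet.1 hp).insert_of_sum hr hj), Finset.mem_insert_self _ _⟩
  · intro p hp
    obtain ⟨hp, hrj⟩ := Finset.mem_filter.1 hp
    exact mem_treeSet.2 ((mem_treeSet.1 hp).erase_of_sum hr hj hrj)
  · intro p hp
    have h := mem_treeSet.1 hp
    exact Prod.ext (Finset.erase_insert (h.notMem_of_lt hjr))
      (Finset.erase_insert (h.edge_notMem_of_lt hjr j))
  · intro p hp
    obtain ⟨hp, hrj⟩ := Finset.mem_filter.1 hp
    exact Prod.ext (Finset.insert_erase (mem_treeSet.1 hp).root_mem) (Finset.insert_erase hrj)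
  · intro p hp
    exact (weight_insert_of_sum leaf w hr
      ((mem_treeSet.1 hp).edge_notMem_of_lt hjr j)).symm

lemma sum_weight_treeSet_of_sum (leaf : Fin N → ℝ) (w : Fin N → Fin N → ℝ)
    (hr : S.kind r = .sum) :
    ∑ p ∈ S.treeSet r, S.weight leaf w p
      = ∑ j ∈ S.children r, w r j * ∑ p ∈ S.treeSet j, S.weight leaf w p := by
  have hsplit : S.treeSet r
      = (S.children r).biUnion fun j => (S.treeSet r).filter fun p => (r, j) ∈ p.2 := by
    ext p
    simp only [Finset.mem_biUnion, Finset.mem_filter]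
    refine ⟨fun hp => ?_, fun ⟨_, _, hp, _⟩ => hp⟩
    have h := mem_treeSet.1 hp
    obtain ⟨j, ⟨hj, hrj⟩, -⟩ := h.sum_edge r h.root_mem hr
    exact ⟨j, hj, hp, hrj⟩
  have hdisj : (S.children r : Set (Fin N)).PairwiseDisjoint
      fun j => (S.treeSet r).filter fun p => (r, j) ∈ p.2 := by
    intro a ha b hb hab
    refine Finset.disjoint_filter.2 fun p hp hap hbp => hab ?_
    have h := mem_treeSet.1 hp
    exact (h.sum_edge r h.root_mem hr).unique ⟨ha, hap⟩ ⟨hb, hbp⟩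
  rw [hsplit, Finset.sum_biUnion hdisj]
  exact Finset.sum_congr rfl fun j hj => sum_weight_treeSet_filter_of_sum leaf w hr hj

end Sum
noncomputable def glue (S : SPN N n) (r : Fin N) (x : ∀ a ∈ S.children r, Subgraph N) :
    Subgraph N :=
  (insert r ((S.children r).attach.biUnion fun a => (x a.1 a.2).1),
    ((S.children r).attach.biUnion fun a => (x a.1 a.2).2) ∪ (S.children r).image (r, ·))

noncomputable def restrictBelow (S : SPN N n) (a : Fin N) (p : Subgraph N) : Subgraph N :=
  (p.1.filter (S.IsDescendant · a), p.2.filter fun e => S.IsDescendant e.1 a)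

section Prod

variable {S : SPN N n} {r : Fin N} {x : ∀ a ∈ S.children r, Subgraph N}

lemma mem_glue_fst {m : Fin N} : m ∈ (S.glue r x).1 ↔ m = r ∨ ∃ a ha, m ∈ (x a ha).1 := by
  simp [glue]

lemma mem_glue_snd {e : Fin N × Fin N} :
    e ∈ (S.glue r x).2 ↔ (∃ a ha, e ∈ (x a ha).2) ∨ e.1 = r ∧ e.2 ∈ S.children r := by
  obtain ⟨k, j⟩ := e
  simp [glue, and_comm, eq_comm]

lemma IsTreeAt.glue (hD : S.Decomposable) (hr : S.kind r = .prod)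
    (hx : ∀ a ha, S.IsTreeAt a (x a ha)) : S.IsTreeAt r (S.glue r x) := by
  have hlt : ∀ a ha m, m ∈ (x a ha).1 → m < r := fun a ha _ hm =>
    ((hx a ha).le_root hm).trans_lt (S.child_lt r a ha)
  refine ⟨mem_glue_fst.2 (Or.inl rfl), ?_, ?_, ?_, ?_⟩
  · intro e he
    rcases mem_glue_snd.1 he with ⟨a, ha, he⟩ | ⟨he₁, he₂⟩
    · obtain ⟨h₁, h₂, h₃⟩ := (hx a ha).edge_mem e he
      exact ⟨mem_glue_fst.2 (Or.inr ⟨a, ha, h₁⟩), mem_glue_fst.2 (Or.inr ⟨a, ha, h₂⟩), h₃⟩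
    · exact ⟨mem_glue_fst.2 (Or.inl he₁),
        mem_glue_fst.2 (Or.inr ⟨e.2, he₂, (hx _ he₂).root_mem⟩), he₁ ▸ he₂⟩
  · intro k hk hks
    rcases mem_glue_fst.1 hk with rfl | ⟨a, ha, hk⟩
    · simp [hr] at hks
    obtain ⟨y, hy, huniq⟩ := (hx a ha).sum_edge k hk hks
    refine ⟨y, ⟨hy.1, mem_glue_snd.2 (Or.inl ⟨a, ha, hy.2⟩)⟩, fun y' ⟨hy'c, hy'⟩ => ?_⟩
    rcases mem_glue_snd.1 hy' with ⟨b, hb, hy'⟩ | ⟨hkr, -⟩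
    · obtain rfl := hD.eq_of_isDescendant hr ha hb ((hx a ha).isDescendant_root hk)
        ((hx b hb).isDescendant_root ((hx b hb).edge_mem _ hy').1)
      exact huniq y' ⟨hy'c, hy'⟩
    · exact absurd hkr (hlt a ha k hk).ne
  · intro k hk hkp y hy
    rcases mem_glue_fst.1 hk with rfl | ⟨a, ha, hk⟩
    · exact mem_glue_snd.2 (Or.inr ⟨rfl, hy⟩)
    · exact mem_glue_snd.2 (Or.inl ⟨a, ha, (hx a ha).prod_edge k hk hkp y hy⟩)
  · intro k hk hkr
    obtain ⟨a, ha, hk⟩ := (mem_glue_fst.1 hk).resolve_left hkr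
    by_cases hka : k = a
    · exact ⟨(r, a), mem_glue_snd.2 (Or.inr ⟨rfl, ha⟩), hka.symm⟩
    · obtain ⟨e, he, he₂⟩ := (hx a ha).exists_parent k hk hka
      exact ⟨e, mem_glue_snd.2 (Or.inl ⟨a, ha, he⟩), he₂⟩

lemma IsTreeAt.restrictBelow {p : Subgraph N} (h : S.IsTreeAt r p) (hD : S.Decomposable)
    (hr : S.kind r = .prod) {a : Fin N} (ha : a ∈ S.children r) :
    S.IsTreeAt a (S.restrictBelow a p) := by
  simp only [SPN.restrictBelow]
  refine ⟨Finset.mem_filter.2 ⟨(h.edge_mem _ (h.prod_edge r h.root_mem hr a ha)).2.1, .refl⟩,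
    ?_, ?_, ?_, ?_⟩
  · intro e he
    obtain ⟨he, hdesc⟩ := Finset.mem_filter.1 he
    obtain ⟨h₁, h₂, h₃⟩ := h.edge_mem e he
    exact ⟨Finset.mem_filter.2 ⟨h₁, hdesc⟩, Finset.mem_filter.2 ⟨h₂, hdesc.head h₃⟩, h₃⟩
  · intro k hk hks
    obtain ⟨hk, hdesc⟩ := Finset.mem_filter.1 hk
    obtain ⟨y, hy, huniq⟩ := h.sum_edge k hk hks
    exact ⟨y, ⟨hy.1, Finset.mem_filter.2 ⟨hy.2, hdesc⟩⟩,
      fun y' hy' => huniq y' ⟨hy'.1, (Finset.mem_filter.1 hy'.2).1⟩⟩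
  · intro k hk hkp y hy
    obtain ⟨hk, hdesc⟩ := Finset.mem_filter.1 hk
    exact Finset.mem_filter.2 ⟨h.prod_edge k hk hkp y hy, hdesc⟩
  · intro k hk hka
    obtain ⟨hk, hdesc⟩ := Finset.mem_filter.1 hk
    have hkr : k ≠ r := (hdesc.le.trans_lt (S.child_lt r a ha)).ne
    obtain ⟨e, he, rfl⟩ := h.exists_parent k hk hkr
    obtain ⟨he₁, -, hchild⟩ := h.edge_mem e he
    refine ⟨e, Finset.mem_filter.2 ⟨he, ?_⟩, rfl⟩
    by_cases her : e.1 = r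
    · rw [her] at hchild
      exact absurd (hD.eq_of_isDescendant hr hchild ha .refl hdesc) hka
    · obtain ⟨j, hj, hdesc'⟩ := h.exists_child_of_ne_root he₁ her
      rwa [hD.eq_of_isDescendant hr hj ha (hdesc'.head hchild) hdesc] at hdesc'

lemma restrictBelow_glue (hD : S.Decomposable) (hr : S.kind r = .prod)
    (hx : ∀ a ha, S.IsTreeAt a (x a ha)) {a : Fin N} (ha : a ∈ S.children r) :
    S.restrictBelow a (S.glue r x) = x a ha := by
  have har := S.child_lt r a ha
  refine Prod.ext (Finset.ext fun m => ?_) (Finset.ext fun e => ?_)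
  · simp only [SPN.restrictBelow, Finset.mem_filter, mem_glue_fst]
    refine ⟨?_, fun hm => ⟨Or.inr ⟨a, ha, hm⟩, (hx a ha).isDescendant_root hm⟩⟩
    rintro ⟨rfl | ⟨b, hb, hm⟩, hdesc⟩
    · exact absurd hdesc.le har.not_ge
    · obtain rfl := hD.eq_of_isDescendant hr hb ha ((hx b hb).isDescendant_root hm) hdesc
      exact hm
  · simp only [SPN.restrictBelow, Finset.mem_filter, mem_glue_snd]
    refine ⟨?_, fun he => ⟨Or.inl ⟨a, ha, he⟩,
      (hx a ha).isDescendant_root ((hx a ha).edge_mem e he).1⟩⟩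
    rintro ⟨⟨b, hb, he⟩ | ⟨her, -⟩, hdesc⟩
    · obtain rfl := hD.eq_of_isDescendant hr hb ha
        ((hx b hb).isDescendant_root ((hx b hb).edge_mem e he).1) hdesc
      exact he
    · exact absurd (her ▸ hdesc.le) har.not_ge

lemma glue_restrictBelow {p : Subgraph N} (h : S.IsTreeAt r p) (hr : S.kind r = .prod) :
    S.glue r (fun a _ => S.restrictBelow a p) = p := by
  refine Prod.ext (Finset.ext fun m => ?_) (Finset.ext fun e => ?_)
  · simp only [mem_glue_fst, SPN.restrictBelow, Finset.mem_filter]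
    refine ⟨?_, fun hm => ?_⟩
    · rintro (rfl | ⟨_, _, hm, _⟩)
      exacts [h.root_mem, hm]
    · by_cases hmr : m = r
      · exact Or.inl hmr
      · obtain ⟨j, hj, hdesc⟩ := h.exists_child_of_ne_root hm hmr
        exact Or.inr ⟨j, hj, hm, hdesc⟩
  · simp only [mem_glue_snd, SPN.restrictBelow, Finset.mem_filter]
    refine ⟨?_, fun he => ?_⟩
    · rintro (⟨_, _, he, _⟩ | ⟨her, hchild⟩)
      · exact he
      · obtain ⟨k, j⟩ := e
        obtain rfl : k = r := her
        exact h.prod_edge k h.root_mem hr j hchild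
    · obtain ⟨he₁, -, hchild⟩ := h.edge_mem e he
      by_cases her : e.1 = r
      · exact Or.inr ⟨her, her ▸ hchild⟩
      · obtain ⟨j, hj, hdesc⟩ := h.exists_child_of_ne_root he₁ her
        exact Or.inl ⟨j, hj, he, hdesc⟩

lemma weight_glue (leaf : Fin N → ℝ) (w : Fin N → Fin N → ℝ) (hD : S.Decomposable)
    (hr : S.kind r = .prod) (hx : ∀ a ha, S.IsTreeAt a (x a ha)) :
    S.weight leaf w (S.glue r x) = ∏ a ∈ (S.children r).attach, S.weight leaf w (x a.1 a.2) := by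
  have hne : ∀ a b : S.children r, a ≠ b → ∀ m, m ∈ (x a.1 a.2).1 → m ∉ (x b.1 b.2).1 :=
    fun a b hab _ hma hmb => hab <| Subtype.ext <| hD.eq_of_isDescendant hr a.2 b.2
      ((hx a.1 a.2).isDescendant_root hma) ((hx b.1 b.2).isDescendant_root hmb)
  have hdisjV : ((S.children r).attach : Set (S.children r)).PairwiseDisjoint
      fun a => (x a.1 a.2).1.filter fun k => S.kind k = .leaf :=
    fun a _ b _ hab => Finset.disjoint_left.2 fun _ hma hmb =>
      hne a b hab _ (Finset.mem_filter.1 hma).1 (Finset.mem_filter.1 hmb).1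
  have hdisjE : ((S.children r).attach : Set (S.children r)).PairwiseDisjoint
      fun a => (x a.1 a.2).2.filter fun e => S.kind e.1 = .sum :=
    fun a _ b _ hab => Finset.disjoint_left.2 fun e hea heb =>
      hne a b hab e.1 ((hx a.1 a.2).edge_mem e (Finset.mem_filter.1 hea).1).1
        ((hx b.1 b.2).edge_mem e (Finset.mem_filter.1 heb).1).1
  have hroot_edges : ((S.children r).image (r, ·)).filter (fun e => S.kind e.1 = .sum) = ∅ :=
    Finset.filter_eq_empty_iff.2 (by simp [hr])
  rw [weight, glue, Finset.filter_union, hroot_edges, Finset.union_empty, Finset.filter_insert,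
    if_neg (by simp [hr]), Finset.filter_biUnion, Finset.filter_biUnion,
    Finset.prod_biUnion hdisjE, Finset.prod_biUnion hdisjV, ← Finset.prod_mul_distrib]
  rfl

lemma sum_weight_treeSet_of_prod (leaf : Fin N → ℝ) (w : Fin N → Fin N → ℝ)
    (hD : S.Decomposable) (hr : S.kind r = .prod) :
    ∑ p ∈ S.treeSet r, S.weight leaf w p
      = ∏ a ∈ S.children r, ∑ p ∈ S.treeSet a, S.weight leaf w p := by
  rw [Finset.prod_sum]
  have hpi : ∀ {x : ∀ a ∈ S.children r, Subgraph N}, x ∈ (S.children r).pi S.treeSet →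
      ∀ a ha, S.IsTreeAt a (x a ha) :=
    fun hx a ha => mem_treeSet.1 (Finset.mem_pi.1 hx a ha)
  refine (Finset.sum_bij' (fun x _ => S.glue r x) (fun p _ a _ => S.restrictBelow a p)
    ?_ ?_ ?_ ?_ ?_).symm
  · exact fun x hx => mem_treeSet.2 (.glue hD hr (hpi hx))
  · exact fun p hp => Finset.mem_pi.2 fun a ha =>
      mem_treeSet.2 ((mem_treeSet.1 hp).restrictBelow hD hr ha)
  · exact fun x hx => funext₂ fun a ha => restrictBelow_glue hD hr (hpi hx) ha
  · exact fun p hp => glue_restrictBelow (mem_treeSet.1 hp) hr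
  · exact fun x hx => (weight_glue leaf w hD hr (hpi hx)).symm

end Prod

theorem value_eq_sum_weight_treeSet (S : SPN N n) (hD : S.Decomposable) (leaf : Fin N → ℝ)
    (w : Fin N → Fin N → ℝ) (r : Fin N) :
    S.value leaf w r = ∑ p ∈ S.treeSet r, S.weight leaf w p := by
  induction r using WellFoundedLT.induction with
  | _ r ih =>
    cases hr : S.kind r with
    | sum =>
      rw [value_of_sum S leaf w hr, sum_weight_treeSet_of_sum leaf w hr]
      exact Finset.sum_congr rfl fun j hj => by rw [ih j (S.child_lt r j hj)]
    | prod =>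
      rw [value_of_prod S leaf w hr, sum_weight_treeSet_of_prod leaf w hD hr]
      exact Finset.prod_congr rfl fun j hj => ih j (S.child_lt r j hj)
    | leaf =>
      rw [value_of_leaf S leaf w hr, treeSet_of_leaf hr, Finset.sum_singleton,
        weight_of_leaf leaf w hr]

end SPN

theorem SPN.value_eq_sum_induced_trees_general {N n : ℕ} (S : SPN N n)
    (hD : S.Decomposable)
    (leaf : Fin N → ℝ)
    (w : Fin N → Fin N → ℝ) :
    S.value leaf w S.root
      = ∑ p ∈ Finset.univ.filter
            (fun p : Finset (Fin N) × Finset (Fin N × Fin N) => S.IsInducedTree p.1 p.2),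
          (∏ e ∈ p.2.filter (fun e => S.kind e.1 = NodeKind.sum), w e.1 e.2)
            * ∏ k ∈ p.1.filter (fun k => S.kind k = NodeKind.leaf), leaf k := by
  have hroot : (Finset.univ.filter fun p : SPN.Subgraph N => S.IsInducedTree p.1 p.2)
      = S.treeSet S.root :=
    Finset.filter_congr fun _ _ => S.isInducedTree_iff_isTreeAt_root
  rw [hroot]
  exact S.value_eq_sum_weight_treeSet hD leaf w S.root

/-- For a complete and decomposable SPN `S`, the root value `V_root(x; w)` equals
the sum over all induced trees of the product of the sum-edge weights in the tree times the
product of the leaf values in the tree (the induced-tree decomposition of the network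
polynomial). -/
theorem SPN.value_eq_sum_induced_trees {N n : ℕ} (S : SPN N n)
    (hC : S.Complete) (hD : S.Decomposable)
    (leaf : Fin N → ℝ) (hleaf : ∀ k, 0 < leaf k)
    (w : Fin N → Fin N → ℝ) (hw : ∀ k j, 0 < w k j) :
    S.value leaf w S.root
      = ∑ p ∈ Finset.univ.filter
            (fun p : Finset (Fin N) × Finset (Fin N × Fin N) => S.IsInducedTree p.1 p.2),
          (∏ e ∈ p.2.filter (fun e => S.kind e.1 = NodeKind.sum), w e.1 e.2)
            * ∏ k ∈ p.1.filter (fun k => S.kind k = NodeKind.leaf), leaf k :=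
  SPN.value_eq_sum_induced_trees_general S hD leaf w
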